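/- arXiv:2310.03506 — 2 statements merged into one kernel-verified Lean document; each statement's English description precedes it below -/
import Mathlib

section
/- If G is an isolate-free bipartite graph, then OOIR(G) = 2·ν_I(G), i.e., the open-open irredundance number equals twice the induced matching number. -/
variable {V : Type*}

/-- `S` is a total dominating set of `G`: every vertex has a neighbor in `S`. -/
def isTDSet (G : SimpleGraph V) (S : Set V) : Prop := ∀ v : V, ∃ u ∈ S, G.Adj v u

/-- `S` is a minimal total dominating set of `G`. -/
def isMinTDSet (G : SimpleGraph V) (S : Set V) : Prop :=
  isTDSet G S ∧ ∀ T : Set V, T ⊂ S → ¬ isTDSet G T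

/-- Upper total domination number `Γ_t`. -/
noncomputable def upperTD (G : SimpleGraph V) [Fintype V] : ℕ :=
  sSup {n | ∃ S : Finset V, isMinTDSet G ↑S ∧ S.card = n}

/-- Total domination number `γ_t`. -/
noncomputable def totalDomNum (G : SimpleGraph V) [Fintype V] : ℕ :=
  sInf {n | ∃ S : Finset V, isTDSet G ↑S ∧ S.card = n}

/-- `S` is an open-open irredundant set: each `v ∈ S` has a neighbor not adjacent
to any other vertex of `S`, i.e. `N(v) \ N(S \ {v}) ≠ ∅`. -/
def isOOIrr (G : SimpleGraph V) (S : Set V) : Prop :=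
  ∀ v ∈ S, ∃ w, G.Adj v w ∧ ∀ u ∈ S, u ≠ v → ¬ G.Adj u w

/-- Open-open irredundance number `OOIR`. -/
noncomputable def ooirNum (G : SimpleGraph V) [Fintype V] : ℕ :=
  sSup {n | ∃ S : Finset V, isOOIrr G ↑S ∧ S.card = n}

/-- `M` is an induced matching: a set of edges of `G` whose endpoints induce a
1-regular subgraph (no two distinct edges share or join endpoints). -/
def isInducedMatching (G : SimpleGraph V) (M : Set (Sym2 V)) : Prop :=
  (∀ e ∈ M, e ∈ G.edgeSet) ∧
  ∀ e ∈ M, ∀ f ∈ M, e ≠ f → ∀ u ∈ e, ∀ v ∈ f, u ≠ v ∧ ¬ G.Adj u v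

/-- Induced matching number `ν_I`. -/
noncomputable def inducedMatchingNum (G : SimpleGraph V) [Fintype V] : ℕ :=
  sSup {n | ∃ M : Finset (Sym2 V), isInducedMatching G ↑M ∧ M.card = n}

/-- `L` is a total dominating sequence of `G`. -/
def isTDSeq (G : SimpleGraph V) (L : List V) : Prop :=
  L.Nodup ∧ isTDSet G {v | v ∈ L} ∧
  ∀ (i : ℕ) (h : i < L.length), ∃ w, G.Adj L[i] w ∧ ∀ u ∈ L.take i, ¬ G.Adj u w

/-- Grundy total domination number. -/
noncomputable def grundyTD (G : SimpleGraph V) [Fintype V] : ℕ :=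
  sSup {n | ∃ L : List V, isTDSeq G L ∧ L.length = n}

/-!
The endpoints of an induced matching form an open-open irredundant set, each endpoint having its
partner as private neighbour. Conversely, let `S` be open-open irredundant and fix a 2-colouring.
Pairing each vertex of one colour class of `S` with a private neighbour gives an induced matching:
all these neighbours lie in the other colour class, so they are pairwise non-adjacent, and
privacy rules out every other adjacency. Summing over the two classes, `|S| ≤ 2 ν_I`.
-/

section

variable {G : SimpleGraph V}

theorem isOOIrr.mono {S T : Set V} (hS : isOOIrr G S) (hTS : T ⊆ S) : isOOIrr G T := by
  intro v hv
  obtain ⟨w, hvw, hpriv⟩ := hS v (hTS hv)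
  exact ⟨w, hvw, fun u hu => hpriv u (hTS hu)⟩

theorem isOOIrr_biUnion_toFinset [DecidableEq V] {M : Finset (Sym2 V)}
    (hM : isInducedMatching G ↑M) : isOOIrr G ↑(M.biUnion Sym2.toFinset) := by
  intro v hv
  obtain ⟨e, heM, hve⟩ : ∃ e ∈ M, v ∈ e := by simpa using hv
  refine ⟨Sym2.Mem.other hve, ?_, ?_⟩
  · rw [← G.mem_edgeSet, Sym2.other_spec hve]
    exact hM.1 e heM
  · intro u hu huv
    obtain ⟨f, hfM, huf⟩ : ∃ f ∈ M, u ∈ f := by simpa using hu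
    by_cases hfe : f = e
    · subst hfe
      rw [← Sym2.other_spec hve, Sym2.mem_iff] at huf
      rcases huf with rfl | rfl
      exacts [absurd rfl huv, G.irrefl]
    · exact (hM.2 f hfM e heM hfe u huf _ (Sym2.other_mem hve)).2

theorem card_biUnion_toFinset [DecidableEq V] {M : Finset (Sym2 V)}
    (hM : isInducedMatching G ↑M) : (M.biUnion Sym2.toFinset).card = 2 * M.card := by
  rw [Finset.card_biUnion, Finset.sum_congr rfl fun e he => Sym2.card_toFinset_of_not_isDiag e
    (G.not_isDiag_of_mem_edgeSet (hM.1 e he)), Finset.sum_const, smul_eq_mul, mul_comm]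
  intro e he f hf hef
  refine Finset.disjoint_left.mpr fun v hve hvf => ?_
  rw [Sym2.mem_toFinset] at hve hvf
  exact (hM.2 e he f hf hef v hve v hvf).1 rfl

theorem exists_inducedMatching_card_eq_of_isOOIrr (c : G.Coloring (Fin 2)) {i : Fin 2}
    {S : Finset V} (hS : isOOIrr G ↑S) (hSi : ∀ v ∈ S, c v = i) :
    ∃ M : Finset (Sym2 V), isInducedMatching G ↑M ∧ M.card = S.card := by
  classical
  choose! p hadj hpriv using hS
  have hp : ∀ v ∈ S, c (p v) ≠ i := fun v hv h => c.valid (hadj v hv) (by rw [hSi v hv, h])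
  have hpp : ∀ v ∈ S, ∀ v' ∈ S, ¬ G.Adj (p v) (p v') := fun v hv v' hv' h =>
    c.valid h (by have := hp v hv; have := hp v' hv'; omega)
  refine ⟨S.image fun v => s(v, p v), ⟨?_, ?_⟩, ?_⟩
  · simp only [Finset.coe_image, Set.forall_mem_image]
    exact hadj
  · simp only [Finset.coe_image, Set.forall_mem_image]
    intro v hv v' hv' hne x hx y hy
    replace hne : v ≠ v' := fun h => hne (h ▸ rfl)
    rw [Sym2.mem_iff] at hx hy
    rcases hx with rfl | rfl <;> rcases hy with rfl | rfl
    · exact ⟨hne, fun h => c.valid h (by rw [hSi x hv, hSi y hv'])⟩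
    · exact ⟨fun h => hp v' hv' (h ▸ hSi x hv), hpriv v' hv' x hv hne⟩
    · exact ⟨fun h => hp v hv (h ▸ hSi y hv'), fun h => hpriv v hv y hv' hne.symm h.symm⟩
    · exact ⟨fun h => hpriv v hv v' hv' hne.symm (h ▸ hadj v' hv'), hpp v hv v' hv'⟩
  · refine Finset.card_image_of_injOn fun v hv v' hv' h => ?_
    rcases Sym2.eq_iff.mp h with ⟨h, -⟩ | ⟨h, -⟩
    · exact h
    · exact absurd (h ▸ hSi v hv) (hp v' hv')

variable [Fintype V]

theorem card_le_ooirNum {S : Finset V} (hS : isOOIrr G ↑S) : S.card ≤ ooirNum G :=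
  le_csSup ⟨Fintype.card V, by rintro _ ⟨T, -, rfl⟩; exact T.card_le_univ⟩ ⟨S, hS, rfl⟩

theorem ooirNum_le {n : ℕ} (h : ∀ S : Finset V, isOOIrr G ↑S → S.card ≤ n) :
    ooirNum G ≤ n := by
  refine csSup_le ⟨0, ∅, by simp [isOOIrr], rfl⟩ ?_
  rintro _ ⟨S, hS, rfl⟩
  exact h S hS

theorem bddAbove_inducedMatching_card :
    BddAbove {n | ∃ M : Finset (Sym2 V), isInducedMatching G ↑M ∧ M.card = n} := by
  classical
  exact ⟨Fintype.card (Sym2 V), by rintro _ ⟨M, -, rfl⟩; exact M.card_le_univ⟩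

theorem card_le_inducedMatchingNum {M : Finset (Sym2 V)} (hM : isInducedMatching G ↑M) :
    M.card ≤ inducedMatchingNum G :=
  le_csSup bddAbove_inducedMatching_card ⟨M, hM, rfl⟩

theorem exists_isInducedMatching_card_eq_inducedMatchingNum (G : SimpleGraph V) :
    ∃ M : Finset (Sym2 V), isInducedMatching G ↑M ∧ M.card = inducedMatchingNum G :=
  Nat.sSup_mem (s := {n | ∃ M : Finset (Sym2 V), isInducedMatching G ↑M ∧ M.card = n})
    ⟨0, ∅, by simp [isInducedMatching], rfl⟩ bddAbove_inducedMatching_card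

end

theorem stmt4_general [Fintype V] (G : SimpleGraph V) (hbip : G.Colorable 2) :
    ooirNum G = 2 * inducedMatchingNum G := by
  classical
  obtain ⟨c⟩ := hbip
  refine le_antisymm (ooirNum_le fun S hS => ?_) ?_
  · have hclass (i : Fin 2) : {v ∈ S | c v = i}.card ≤ inducedMatchingNum G := by
      obtain ⟨M, hM, hcard⟩ := exists_inducedMatching_card_eq_of_isOOIrr c
        (hS.mono (Finset.coe_subset.mpr (S.filter_subset _)))
        fun v hv => (Finset.mem_filter.mp hv).2
      exact hcard ▸ card_le_inducedMatchingNum hM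
    calc S.card = ∑ i, {v ∈ S | c v = i}.card :=
          Finset.card_eq_sum_card_fiberwise fun v _ => Finset.mem_univ (c v)
      _ ≤ ∑ _ : Fin 2, inducedMatchingNum G := Finset.sum_le_sum fun i _ => hclass i
      _ = 2 * inducedMatchingNum G := by simp
  · obtain ⟨M, hM, hcard⟩ := exists_isInducedMatching_card_eq_inducedMatchingNum G
    rw [← hcard, ← card_biUnion_toFinset hM]
    exact card_le_ooirNum (isOOIrr_biUnion_toFinset hM)

/-- In an isolate-free bipartite graph, `OOIR(G) = 2·ν_I(G)`. -/
theorem stmt4 [Fintype V] (G : SimpleGraph V) (hG : ∀ v : V, ∃ w, G.Adj v w)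
    (hbip : G.Colorable 2) :
    ooirNum G = 2 * inducedMatchingNum G :=
  stmt4_general G hbip
end

section
/- For k ≥ 1, let G_k be built from k disjoint copies H_1,...,H_k of the join P_4 ⊕ P_4 (with paths Q_{i,1}: u_{i,1}v_{i,1}w_{i,1}x_{i,1} and Q_{i,2}: u_{i,2}v_{i,2}w_{i,2}x_{i,2} in H_i), with edges w_{i,2}w_{i+1,1} added cyclically for k ≥ 2. Then every minimal total dominating set of G_k contains at most two vertices from each copy H_i; consequently Γ_t(G_k) = 2k. -/
variable {V : Type*}

/-- The graph `G_k`: `k` disjoint copies of `P_4 ⊕ P_4` joined cyclically. The vertex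
`(i, s, p)` is vertex number `p` of the path `Q_{i+1,s+1}`; within a copy the two paths
are completely joined, and `w_{i,2} = (i,1,2)` is joined to `w_{i+1,1} = (i+1,0,2)`
cyclically. -/
def Gk (k : ℕ) : SimpleGraph (Fin k × Fin 2 × Fin 4) :=
  SimpleGraph.fromRel (fun a b =>
    (a.1 = b.1 ∧ a.2.1 ≠ b.2.1) ∨
    (a.1 = b.1 ∧ a.2.1 = b.2.1 ∧ (a.2.2 : ℕ) + 1 = (b.2.2 : ℕ)) ∨
    (a.2.1 = 1 ∧ a.2.2 = 2 ∧ b.2.1 = 0 ∧ b.2.2 = 2 ∧ (b.1 : ℕ) = ((a.1 : ℕ) + 1) % k))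

/-!
A total dominating set `S` is minimal exactly when every `v ∈ S` has a private neighbour, one
adjacent to no other vertex of `S`. Among any three vertices of a copy `P₄ ⊕ P₄` there is one
which is not a `w`-vertex, so that all its neighbours lie in the copy, and all of whose
neighbours are already dominated by the other two; it has no private neighbour. Summing over the
copies gives `Γ_t(G_k) ≤ 2k`, and the vertices `v_{i,1}, w_{i,1}` form a minimal total
dominating set of size `2k`.
-/

open Finset

theorem isMinTDSet_iff_isTDSet_and_isOOIrr {G : SimpleGraph V} {S : Set V} :
    isMinTDSet G S ↔ isTDSet G S ∧ isOOIrr G S := by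
  refine ⟨fun h => ⟨h.1, fun v hv => ?_⟩, fun ⟨hdom, hirr⟩ => ⟨hdom, fun T hTS hT => ?_⟩⟩
  · by_contra! hnopriv
    refine h.2 (S \ {v}) (Set.sdiff_singleton_ssubset.2 hv) fun x => ?_
    obtain ⟨u, huS, hxu⟩ := h.1 x
    by_cases huv : u = v
    · subst huv
      obtain ⟨u', hu'S, hu'u, hu'x⟩ := hnopriv x hxu.symm
      exact ⟨u', ⟨hu'S, hu'u⟩, hu'x.symm⟩
    · exact ⟨u, ⟨huS, huv⟩, hxu⟩
  · obtain ⟨v, hvS, hvT⟩ := Set.exists_of_ssubset hTS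
    obtain ⟨w, -, hpriv⟩ := hirr v hvS
    obtain ⟨u, huT, hwu⟩ := hT w
    exact hpriv u (hTS.1 huT) (fun huv => hvT (huv ▸ huT)) hwu.symm

def joinP4 : SimpleGraph (Fin 2 × Fin 4) where
  Adj a b := a.1 ≠ b.1 ∨ (a.1 = b.1 ∧ ((a.2 : ℕ) + 1 = b.2 ∨ (b.2 : ℕ) + 1 = a.2))
  symm := ⟨fun a b h => by omega⟩
  loopless := ⟨fun a h => by omega⟩

instance : DecidableRel joinP4.Adj := fun a b => by unfold joinP4; infer_instance

set_option maxRecDepth 10000 in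
theorem joinP4_exists_dominated_of_three_le_card (T : Finset (Fin 2 × Fin 4)) (hT : 3 ≤ #T) :
    ∃ v ∈ T, v.2 ≠ 2 ∧ ∀ w, joinP4.Adj v w → ∃ u ∈ T, u ≠ v ∧ joinP4.Adj u w := by
  revert T
  decide

namespace Gk

variable {k : ℕ} {a b : Fin k × Fin 2 × Fin 4}

theorem adj_iff_of_fst_eq (h : a.1 = b.1) : (Gk k).Adj a b ↔ joinP4.Adj a.2 b.2 := by
  rw [Gk, SimpleGraph.fromRel_adj]
  simp only [joinP4, ne_eq, Prod.ext_iff, Fin.ext_iff, Fin.val_zero, Fin.val_one, Fin.val_two] at h ⊢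
  omega

theorem adj_mk_mk_iff {i : Fin k} {p q : Fin 2 × Fin 4} :
    (Gk k).Adj (i, p) (i, q) ↔ joinP4.Adj p q :=
  adj_iff_of_fst_eq rfl

theorem fst_eq_of_adj (h : (Gk k).Adj a b) (ha : a.2.2 ≠ 2) : a.1 = b.1 := by
  simp only [Gk, SimpleGraph.fromRel_adj] at h
  omega

end Gk

theorem card_filter_fst_le_two_of_isOOIrr {k : ℕ} {S : Finset (Fin k × Fin 2 × Fin 4)}
    (hS : isOOIrr (Gk k) ↑S) (i : Fin k) : #(S.filter (·.1 = i)) ≤ 2 := by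
  by_contra! h3
  set T := (S.filter (·.1 = i)).image Prod.snd
  have hmem : ∀ p, p ∈ T ↔ (i, p) ∈ S := fun p => by
    simp only [T, mem_image, mem_filter]
    refine ⟨fun ⟨a, ⟨ha, hai⟩, hap⟩ => ?_, fun h => ⟨_, ⟨h, rfl⟩, rfl⟩⟩
    obtain rfl : a = (i, p) := Prod.ext hai hap
    exact ha
  have hT : #T = #(S.filter (·.1 = i)) := card_image_of_injOn fun a ha b hb hab =>
    Prod.ext ((mem_filter.1 ha).2.trans (mem_filter.1 hb).2.symm) hab
  obtain ⟨v, hvT, hv2, hdom⟩ := joinP4_exists_dominated_of_three_le_card T (by omega)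
  obtain ⟨w, hvw, hpriv⟩ := hS (i, v) ((hmem v).1 hvT)
  have hw : i = w.1 := Gk.fst_eq_of_adj hvw hv2
  obtain ⟨u, huT, huv, huw⟩ := hdom w.2 ((Gk.adj_iff_of_fst_eq hw).1 hvw)
  exact hpriv (i, u) ((hmem u).1 huT) (by simpa using huv) ((Gk.adj_iff_of_fst_eq hw).2 huw)

theorem card_le_two_mul_of_isMinTDSet {k : ℕ} {S : Finset (Fin k × Fin 2 × Fin 4)}
    (hS : isMinTDSet (Gk k) ↑S) : #S ≤ 2 * k := calc
  #S = ∑ i, #(S.filter (·.1 = i)) := card_eq_sum_card_fiberwise fun _ _ => mem_univ _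
  _ ≤ ∑ _i : Fin k, 2 := sum_le_sum fun i _ =>
    card_filter_fst_le_two_of_isOOIrr (isMinTDSet_iff_isTDSet_and_isOOIrr.1 hS).2 i
  _ = 2 * k := by simp [mul_comm]

theorem isTDSet_Gk_univ_product {k : ℕ} {T : Finset (Fin 2 × Fin 4)}
    (hT : ∀ p, ∃ q ∈ T, joinP4.Adj p q) :
    isTDSet (Gk k) ↑(univ ×ˢ T : Finset (Fin k × Fin 2 × Fin 4)) := fun ⟨i, p⟩ => by
  obtain ⟨q, hqT, hpq⟩ := hT p
  exact ⟨(i, q), by simpa using hqT, Gk.adj_mk_mk_iff.2 hpq⟩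

theorem isOOIrr_Gk_univ_product {k : ℕ} {T : Finset (Fin 2 × Fin 4)}
    (hT : ∀ v ∈ T, ∃ w, w.2 ≠ 2 ∧ joinP4.Adj v w ∧ ∀ u ∈ T, u ≠ v → ¬ joinP4.Adj u w) :
    isOOIrr (Gk k) ↑(univ ×ˢ T : Finset (Fin k × Fin 2 × Fin 4)) := by
  rintro ⟨i, v⟩ hv
  obtain ⟨w, hw2, hvw, hpriv⟩ := hT v (by simpa using hv)
  refine ⟨(i, w), Gk.adj_mk_mk_iff.2 hvw, fun ⟨j, u⟩ hu huv huw => ?_⟩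
  have hji : j = i := (Gk.fst_eq_of_adj huw.symm hw2).symm
  subst hji
  exact hpriv u (by simpa using hu) (by simpa using huv) (Gk.adj_mk_mk_iff.1 huw)

theorem isMinTDSet_Gk_v_w (k : ℕ) :
    isMinTDSet (Gk k) ↑(univ ×ˢ {(0, 1), (0, 2)} : Finset (Fin k × Fin 2 × Fin 4)) :=
  isMinTDSet_iff_isTDSet_and_isOOIrr.2
    ⟨isTDSet_Gk_univ_product (by decide), isOOIrr_Gk_univ_product (by decide)⟩

theorem stmt10_general (k : ℕ) :
    (∀ S : Finset (Fin k × Fin 2 × Fin 4), isMinTDSet (Gk k) ↑S →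
      ∀ i : Fin k, (S.filter (fun a => a.1 = i)).card ≤ 2) ∧
    upperTD (Gk k) = 2 * k := by
  refine ⟨fun S hS => card_filter_fst_le_two_of_isOOIrr
    (isMinTDSet_iff_isTDSet_and_isOOIrr.1 hS).2, IsGreatest.csSup_eq ⟨?_, ?_⟩⟩
  · exact ⟨_, isMinTDSet_Gk_v_w k, by simp [mul_comm]⟩
  · rintro _ ⟨S, hS, rfl⟩
    exact card_le_two_mul_of_isMinTDSet hS

/-- Every minimal TD-set of `G_k` has at most two vertices in each copy `H_i`;
consequently `Γ_t(G_k) = 2k`. -/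
theorem stmt10 (k : ℕ) (hk : 1 ≤ k) :
    (∀ S : Finset (Fin k × Fin 2 × Fin 4), isMinTDSet (Gk k) ↑S →
      ∀ i : Fin k, (S.filter (fun a => a.1 = i)).card ≤ 2) ∧
    upperTD (Gk k) = 2 * k :=
  stmt10_general k
end
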